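/- arXiv:2001.03719 — 3 statements merged into one kernel-verified Lean document; each statement's English description precedes it below -/
import Mathlib

section
/- If W is a Bernoulli random variable with P(W=1|X=x)=e(x), the potential outcomes (Y¹,Y⁰) are conditionally independent of W given X, and 0<e(x)<1 for all x, then E[W·Y/e(X)] = E[Y¹], where Y = W·Y¹+(1−W)·Y⁰. -/
open MeasureTheory ProbabilityTheory

/-!
Unconfoundedness says that, given `X`, the treatment `W` is independent of the potential outcomes,
so conditioning `W` on `(X, Y¹, Y⁰)` instead of on `X` alone does not change its conditional
expectation: `E[W | X, Y¹, Y⁰] = e(X)`. Since `W·Y = W·Y¹` and `Y¹/e(X)` is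
`σ(X, Y¹, Y⁰)`-measurable, pulling it out of the conditional expectation gives
`E[W·Y/e(X)] = E[(Y¹/e(X))·E[W | X, Y¹, Y⁰]] = E[Y¹]`.
-/

namespace MeasurableSpace

variable {Ω : Type*} {m₁ m₂ : MeasurableSpace Ω}

theorem isPiSystem_image2_inter :
    IsPiSystem
      (Set.image2 (· ∩ ·) {s | MeasurableSet[m₁] s} {t | MeasurableSet[m₂] t}) := by
  rintro _ ⟨s, hs, t, ht, rfl⟩ _ ⟨s', hs', t', ht', rfl⟩ -
  exact ⟨s ∩ s', hs.inter hs', t ∩ t', ht.inter ht', Set.inter_inter_inter_comm s s' t t'⟩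

theorem generateFrom_image2_inter :
    generateFrom (Set.image2 (· ∩ ·) {s | MeasurableSet[m₁] s} {t | MeasurableSet[m₂] t})
      = m₁ ⊔ m₂ := by
  refine le_antisymm (generateFrom_le ?_) (sup_le (fun s hs => ?_) (fun t ht => ?_))
  · rintro _ ⟨s, hs, t, ht, rfl⟩
    exact (le_sup_left (a := m₁) _ hs).inter (le_sup_right (b := m₂) _ ht)
  · exact measurableSet_generateFrom ⟨s, hs, Set.univ, MeasurableSet.univ, Set.inter_univ s⟩
  · exact measurableSet_generateFrom ⟨Set.univ, MeasurableSet.univ, t, ht, Set.univ_inter t⟩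

end MeasurableSpace

namespace MeasureTheory

variable {Ω E : Type*} [NormedAddCommGroup E] [NormedSpace ℝ E] {m mΩ : MeasurableSpace Ω}
  {μ : Measure Ω} {f g : Ω → E}

theorem setIntegral_eq_of_isPiSystem (hm : m ≤ mΩ) {C : Set (Set Ω)}
    (h_eq : m = MeasurableSpace.generateFrom C) (hC : IsPiSystem C)
    (hf : Integrable f μ) (hg : Integrable g μ) (h_univ : ∫ x, f x ∂μ = ∫ x, g x ∂μ)
    (h_basic : ∀ t ∈ C, ∫ x in t, f x ∂μ = ∫ x in t, g x ∂μ)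
    {t : Set Ω} (ht : MeasurableSet[m] t) : ∫ x in t, f x ∂μ = ∫ x in t, g x ∂μ := by
  induction t, ht using MeasurableSpace.induction_on_inter h_eq hC with
  | empty => simp
  | basic t ht => exact h_basic t ht
  | compl t ht ih =>
    rw [setIntegral_compl (hm t ht) hf, setIntegral_compl (hm t ht) hg, ih, h_univ]
  | iUnion t hdisj ht ih =>
    rw [integral_iUnion (fun i => hm _ (ht i)) hdisj hf.integrableOn,
      integral_iUnion (fun i => hm _ (ht i)) hdisj hg.integrableOn]
    exact tsum_congr ih

end MeasureTheory

namespace ProbabilityTheory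

variable {Ω : Type*} {m' m₁ m₂ mΩ : MeasurableSpace Ω} [StandardBorelSpace Ω]
  {μ : Measure Ω} [IsFiniteMeasure μ] {s : Set Ω}

theorem condExp_indicator_sup_ae_eq_of_condIndep (hm' : m' ≤ mΩ) (hm₁ : m₁ ≤ mΩ)
    (hm₂ : m₂ ≤ mΩ) (h_indep : CondIndep m' m₁ m₂ hm' μ) (hs : MeasurableSet[m₁] s) :
    μ⟦s | m' ⊔ m₂⟧ =ᵐ[μ] μ⟦s | m'⟧ := by
  have hs_int : Integrable (s.indicator fun _ => (1 : ℝ)) μ :=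
    (integrable_const 1).indicator (hm₁ s hs)
  refine (ae_eq_condExp_of_forall_setIntegral_eq (sup_le hm' hm₂) hs_int
    (fun _ _ _ => integrable_condExp.integrableOn) (fun t ht _ => ?_)
    (stronglyMeasurable_condExp.mono (le_sup_left : m' ≤ m' ⊔ m₂)).aestronglyMeasurable).symm
  refine setIntegral_eq_of_isPiSystem (sup_le hm' hm₂)
    MeasurableSpace.generateFrom_image2_inter.symm MeasurableSpace.isPiSystem_image2_inter
    integrable_condExp hs_int (integral_condExp hm') ?_ ht
  rintro _ ⟨a, ha, b, hb, rfl⟩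
  have hb' : MeasurableSet b := hm₂ b hb
  have h_ind_mul :
      b.indicator (fun _ => (1 : ℝ)) * μ⟦s | m'⟧ = b.indicator (μ⟦s | m'⟧) := by
    ext ω; by_cases hω : ω ∈ b <;> simp [hω]
  have h_prod_int : Integrable (b.indicator (fun _ => (1 : ℝ)) * μ⟦s | m'⟧) μ :=
    h_ind_mul ▸ integrable_condExp.indicator hb'
  have h_pull :
      μ[b.indicator (fun _ => (1 : ℝ)) * μ⟦s | m'⟧ | m'] =ᵐ[μ] μ⟦b | m'⟧ * μ⟦s | m'⟧ :=
    condExp_mul_of_stronglyMeasurable_right stronglyMeasurable_condExp h_prod_int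
      ((integrable_const 1).indicator hb')
  have h_factor : μ⟦s ∩ b | m'⟧ =ᵐ[μ] μ⟦s | m'⟧ * μ⟦b | m'⟧ :=
    (condIndep_iff m' m₁ m₂ hm' hm₁ hm₂ μ).mp h_indep s b hs hb
  calc ∫ ω in a ∩ b, (μ⟦s | m'⟧) ω ∂μ
      = ∫ ω in a, (b.indicator (fun _ => (1 : ℝ)) * μ⟦s | m'⟧) ω ∂μ := by
        rw [h_ind_mul, setIntegral_indicator hb']
    _ = ∫ ω in a, (μ[b.indicator (fun _ => (1 : ℝ)) * μ⟦s | m'⟧ | m']) ω ∂μ :=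
        (setIntegral_condExp hm' h_prod_int ha).symm
    _ = ∫ ω in a, (μ⟦s ∩ b | m'⟧) ω ∂μ := by
        refine setIntegral_congr_ae (hm' a ha) ?_
        filter_upwards [h_pull, h_factor] with ω h1 h2 _
        rw [h1, h2, Pi.mul_apply, Pi.mul_apply, mul_comm]
    _ = ∫ ω in a ∩ b, s.indicator (fun _ => (1 : ℝ)) ω ∂μ := by
        rw [setIntegral_condExp hm' ((integrable_const 1).indicator ((hm₁ s hs).inter hb')) ha,
          ← setIntegral_indicator hb', Set.indicator_indicator, Set.inter_comm]

end ProbabilityTheory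

theorem ipw_identifies_treated_mean_general
    {Ω : Type*} [MeasurableSpace Ω] [StandardBorelSpace Ω]
    (μ : Measure Ω) [IsProbabilityMeasure μ]
    (X : Ω → ℝ) (W : Ω → ℝ) (Y1 Y0 Y : Ω → ℝ)
    (hX : Measurable X) (hW : Measurable W) (hY1 : Measurable Y1) (hY0 : Measurable Y0)
    (hWbin : ∀ ω, W ω = 0 ∨ W ω = 1)
    (hY : ∀ ω, Y ω = W ω * Y1 ω + (1 - W ω) * Y0 ω)
    (e : ℝ → ℝ) (he : Measurable e)
    (hoverlap : ∀ x, 0 < e x ∧ e x < 1)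
    (hprop : μ[W | MeasurableSpace.comap X inferInstance] =ᵐ[μ] fun ω => e (X ω))
    (hunconf : CondIndepFun (MeasurableSpace.comap X inferInstance) (hX.comap_le) W
      (fun ω => (Y1 ω, Y0 ω)) μ)
    (hint : Integrable (fun ω => W ω * Y ω / e (X ω)) μ) :
    ∫ ω, W ω * Y ω / e (X ω) ∂μ = ∫ ω, Y1 ω ∂μ := by
  have hmY := (hY1.prodMk hY0).comap_le
  set mX := MeasurableSpace.comap X inferInstance
  set mY := MeasurableSpace.comap (fun ω => (Y1 ω, Y0 ω)) inferInstance
  have hW_ind : W = (W ⁻¹' {1}).indicator fun _ => 1 := by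
    ext ω; rcases hWbin ω with h | h <;> simp [h]
  have hW_int : Integrable W μ :=
    hW_ind ▸ (integrable_const 1).indicator (hW (measurableSet_singleton 1))
  have h_score : μ[W | mX ⊔ mY] =ᵐ[μ] fun ω => e (X ω) := by
    rw [hW_ind] at hprop ⊢
    refine (condExp_indicator_sup_ae_eq_of_condIndep hX.comap_le hW.comap_le hmY
      ((condIndepFun_iff_condIndep _ _ _ _ _).mp hunconf) ?_).trans hprop
    exact ⟨{1}, measurableSet_singleton 1, rfl⟩
  set g : Ω → ℝ := fun ω => Y1 ω / e (X ω)
  have hg : StronglyMeasurable[mX ⊔ mY] g :=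
    (((measurable_fst.comp (comap_measurable _)).mono le_sup_right le_rfl).div
      ((he.comp (comap_measurable X)).mono le_sup_left le_rfl)).stronglyMeasurable
  have h_weighted : (fun ω => W ω * Y ω / e (X ω)) = g * W := by
    ext ω; rcases hWbin ω with h | h <;> simp [g, hY, h, mul_comm]
  calc ∫ ω, W ω * Y ω / e (X ω) ∂μ = ∫ ω, μ[g * W | mX ⊔ mY] ω ∂μ := by
        rw [h_weighted, integral_condExp (sup_le hX.comap_le hmY)]
    _ = ∫ ω, Y1 ω ∂μ := by
        refine integral_congr_ae ?_
        filter_upwards [condExp_mul_of_stronglyMeasurable_left hg (h_weighted ▸ hint) hW_int,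
          h_score] with ω h_pull h_e
        rw [h_pull, Pi.mul_apply, h_e]
        exact div_mul_cancel₀ (Y1 ω) (hoverlap (X ω)).1.ne'

/-- IPW identification of E[Y¹]: under unconfoundedness and overlap,
`E[W·Y/e(X)] = E[Y¹]` where `Y = W·Y¹ + (1-W)·Y⁰`. -/
theorem ipw_identifies_treated_mean
    {Ω : Type*} [MeasurableSpace Ω] [StandardBorelSpace Ω]
    (μ : Measure Ω) [IsProbabilityMeasure μ]
    (X : Ω → ℝ) (W : Ω → ℝ) (Y1 Y0 Y : Ω → ℝ)
    (hX : Measurable X) (hW : Measurable W) (hY1 : Measurable Y1) (hY0 : Measurable Y0)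
    (hWbin : ∀ ω, W ω = 0 ∨ W ω = 1)
    (hY : ∀ ω, Y ω = W ω * Y1 ω + (1 - W ω) * Y0 ω)
    (e : ℝ → ℝ) (he : Measurable e)
    (hoverlap : ∀ x, 0 < e x ∧ e x < 1)
    (hprop : μ[W | MeasurableSpace.comap X inferInstance] =ᵐ[μ] fun ω => e (X ω))
    (hunconf : CondIndepFun (MeasurableSpace.comap X inferInstance) (hX.comap_le) W
      (fun ω => (Y1 ω, Y0 ω)) μ)
    (hY1int : Integrable Y1 μ)
    (hint : Integrable (fun ω => W ω * Y ω / e (X ω)) μ) :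
    ∫ ω, W ω * Y ω / e (X ω) ∂μ = ∫ ω, Y1 ω ∂μ :=
  ipw_identifies_treated_mean_general μ X W Y1 Y0 Y hX hW hY1 hY0 hWbin hY e he hoverlap hprop
    hunconf hint
end

section
/- Balancing property of the propensity score: if e(X)=P(W=1|X), then W ⟂ X | e(X); that is, conditional on the propensity score, the treatment indicator is independent of the covariates, because P(W=1|X, e(X)) = e(X) = P(W=1|e(X)). -/
/-!
If `𝒢 ≤ σ(X)` and `P(W ∈ s | X)` is `𝒢`-measurable for every `s`, then `W ⟂ X | 𝒢`: for
`B ∈ σ(X)`, the tower property and pulling out `1_B` give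
`P(W ∈ s, X ∈ B | 𝒢) = E[P(W ∈ s | X) 1_B | 𝒢] = P(W ∈ s | X) P(X ∈ B | 𝒢)`,
and `P(W ∈ s | X) = P(W ∈ s | 𝒢)`. For binary `W`, `1_{W ∈ s}` is affine in `W`, so
`P(W ∈ s | X)` is affine in `E[W | X] = e(X)`, which is measurable for `𝒢 = σ(e(X))`.
-/

open MeasureTheory ProbabilityTheory

section

variable {Ω : Type*} {m m₁ m₀ : MeasurableSpace Ω} {μ : Measure Ω}

theorem condExp_ae_eq_of_condExp_ae_eq_of_le [IsFiniteMeasure μ] {E : Type*}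
    [NormedAddCommGroup E] [NormedSpace ℝ E] [CompleteSpace E] {f g : Ω → E}
    (hm : m ≤ m₁) (hm₁ : m₁ ≤ m₀) (hfg : μ[f | m₁] =ᵐ[μ] g)
    (hg : AEStronglyMeasurable[m] g μ) : μ[f | m] =ᵐ[μ] g :=
  calc μ[f | m] =ᵐ[μ] μ[μ[f | m₁] | m] := (condExp_condExp_of_le hm hm₁).symm
    _ =ᵐ[μ] μ[g | m] := condExp_congr_ae hfg
    _ =ᵐ[μ] g := condExp_of_aestronglyMeasurable' (hm.trans hm₁) hg
      (integrable_condExp.congr hfg)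

theorem condExp_inter_ae_eq_mul_of_aestronglyMeasurable [IsFiniteMeasure μ] {A B : Set Ω}
    (hm : m ≤ m₁) (hm₁ : m₁ ≤ m₀) (hA : MeasurableSet[m₀] A) (hB : MeasurableSet[m₁] B)
    (hAm : AEStronglyMeasurable[m] (μ⟦A | m₁⟧) μ) :
    μ⟦A ∩ B | m⟧ =ᵐ[μ] μ⟦A | m⟧ * μ⟦B | m⟧ := by
  have hindicator : μ⟦A | m₁⟧ * B.indicator (fun _ ↦ 1) = B.indicator (μ⟦A | m₁⟧) := by
    ext ω
    simp only [Pi.mul_apply, ← Set.indicator_mul_right, mul_one]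
  have hAB : μ⟦A ∩ B | m₁⟧ =ᵐ[μ] μ⟦A | m₁⟧ * B.indicator (fun _ ↦ 1) := by
    rw [Set.inter_comm, ← Set.indicator_indicator, hindicator]
    exact condExp_indicator ((integrable_const 1).indicator hA) hB
  have hprod_int : Integrable (μ⟦A | m₁⟧ * B.indicator (fun _ ↦ 1)) μ := by
    rw [hindicator]
    exact integrable_condExp.indicator (hm₁ _ hB)
  calc μ⟦A ∩ B | m⟧ =ᵐ[μ] μ[μ⟦A ∩ B | m₁⟧ | m] := (condExp_condExp_of_le hm hm₁).symm
    _ =ᵐ[μ] μ[μ⟦A | m₁⟧ * B.indicator (fun _ ↦ 1) | m] := condExp_congr_ae hAB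
    _ =ᵐ[μ] μ⟦A | m₁⟧ * μ⟦B | m⟧ := condExp_mul_of_aestronglyMeasurable_left hAm hprod_int
        ((integrable_const 1).indicator (hm₁ _ hB))
    _ =ᵐ[μ] μ⟦A | m⟧ * μ⟦B | m⟧ :=
        (condExp_ae_eq_of_condExp_ae_eq_of_le hm hm₁ (ae_eq_refl _) hAm).symm.mul (ae_eq_refl _)

theorem condIndepFun_of_aestronglyMeasurable_condExp_preimage [StandardBorelSpace Ω]
    [IsFiniteMeasure μ] {β γ : Type*} [MeasurableSpace β] [mγ : MeasurableSpace γ]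
    {W : Ω → β} {X : Ω → γ} (hW : Measurable W) (hX : Measurable X) {hm₀ : m ≤ m₀}
    (hm : m ≤ mγ.comap X)
    (hWX : ∀ s, MeasurableSet s → AEStronglyMeasurable[m] (μ⟦W ⁻¹' s | mγ.comap X⟧) μ) :
    CondIndepFun m hm₀ W X μ := by
  rw [condIndepFun_iff_condExp_inter_preimage_eq_mul hW hX]
  intro s t hs ht
  exact condExp_inter_ae_eq_mul_of_aestronglyMeasurable hm hX.comap_le (hW hs) ⟨t, ht, rfl⟩
    (hWX s hs)

theorem exists_indicator_preimage_eq_affine {W : Ω → ℝ} (hW : ∀ ω, W ω = 0 ∨ W ω = 1)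
    (s : Set ℝ) : ∃ a b : ℝ, (W ⁻¹' s).indicator (fun _ ↦ 1) = fun ω ↦ a + b * W ω := by
  set c : ℝ → ℝ := s.indicator (fun _ ↦ 1)
  refine ⟨c 0, c 1 - c 0, funext fun ω ↦ ?_⟩
  have hc : (W ⁻¹' s).indicator (fun _ ↦ 1) ω = c (W ω) :=
    Set.indicator_comp_right (g := fun _ ↦ (1 : ℝ)) W
  rcases hW ω with h | h <;> simp [hc, h]

theorem aestronglyMeasurable_condExp_indicator_preimage_of_forall_eq_zero_or_eq_one
    [IsFiniteMeasure μ] {m' : MeasurableSpace Ω} {W : Ω → ℝ} (hm : m ≤ m₀)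
    (hWm : Measurable[m₀] W) (hW : ∀ ω, W ω = 0 ∨ W ω = 1)
    (hcondExp : AEStronglyMeasurable[m'] (μ[W | m]) μ) (s : Set ℝ) :
    AEStronglyMeasurable[m'] (μ⟦W ⁻¹' s | m⟧) μ := by
  have hWint : Integrable W μ := by
    refine .of_bound hWm.aestronglyMeasurable 1 (ae_of_all _ fun ω ↦ ?_)
    rcases hW ω with h | h <;> simp [h]
  obtain ⟨a, b, hab⟩ := exists_indicator_preimage_eq_affine hW s
  have haffine : μ⟦W ⁻¹' s | m⟧ =ᵐ[μ] fun ω ↦ a + b * μ[W | m] ω := by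
    rw [hab, show (fun ω ↦ a + b * W ω) = (fun _ ↦ a) + b • W from rfl]
    filter_upwards [condExp_add (integrable_const a) (hWint.smul b) m,
      condExp_smul (μ := μ) b W m] with ω hadd hsmul
    rw [hadd, Pi.add_apply, condExp_const hm, hsmul, Pi.smul_apply, smul_eq_mul]
  exact (aestronglyMeasurable_const.add (hcondExp.const_mul b)).congr haffine.symm

end

/-- Balancing property of the propensity score: if `e(X) = P(W=1|X)`, then
conditionally on `e(X)` the treatment `W` is independent of the covariates `X`,
and `P(W=1|e(X)) = e(X)`. -/
theorem propensity_score_balancing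
    {Ω : Type*} [MeasurableSpace Ω] [StandardBorelSpace Ω]
    (μ : Measure Ω) [IsProbabilityMeasure μ]
    (X : Ω → ℝ) (W : Ω → ℝ)
    (hX : Measurable X) (hW : Measurable W)
    (hWbin : ∀ ω, W ω = 0 ∨ W ω = 1)
    (e : ℝ → ℝ) (he : Measurable e)
    (hprop : μ[W | MeasurableSpace.comap X inferInstance] =ᵐ[μ] fun ω => e (X ω)) :
    CondIndepFun (MeasurableSpace.comap (fun ω => e (X ω)) inferInstance)
      ((he.comp hX).comap_le) W X μ ∧
    μ[W | MeasurableSpace.comap (fun ω => e (X ω)) inferInstance]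
      =ᵐ[μ] fun ω => e (X ω) := by
  have hle : MeasurableSpace.comap (fun ω => e (X ω)) inferInstance
      ≤ MeasurableSpace.comap X inferInstance :=
    (he.comp (comap_measurable X)).comap_le
  have hscore : AEStronglyMeasurable[MeasurableSpace.comap (fun ω => e (X ω)) inferInstance]
      (fun ω => e (X ω)) μ :=
    (comap_measurable _).aestronglyMeasurable
  refine ⟨condIndepFun_of_aestronglyMeasurable_condExp_preimage hW hX hle fun s _ ↦ ?_,
    condExp_ae_eq_of_condExp_ae_eq_of_le hle hX.comap_le hprop hscore⟩
  exact aestronglyMeasurable_condExp_indicator_preimage_of_forall_eq_zero_or_eq_one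
    hX.comap_le hW hWbin (hscore.congr hprop.symm) s
end

section
/- Double robustness of conditional-expectation identification: if either (a) the working propensity model ẽ(x) equals the true propensity e(x) almost surely, or (b) the working outcome model m̃₁(x) equals E[Y¹|X=x] almost surely, then E[ W·Y/ẽ(X) − ((W−ẽ(X))/ẽ(X))·m̃₁(X) ] = E[Y¹], under unconfoundedness and overlap. -/
/-!
Write `m'` for the σ-algebra generated by `X`. Everything rests on the pull-out property
`∫ φ g = ∫ φ μ[g|m']` for `m'`-measurable `φ`, and on the product rule
`μ[W Y¹|m'] = μ[W|m'] μ[Y¹|m']`, which is unconfoundedness read through the regular conditional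
distribution given `m'`.

If `ẽ = e`, the score is the inverse-propensity-weighted term `W Y¹/e(X)`, whose mean is
`E[e(X) μ[Y¹|m'] / e(X)] = E[Y¹]`, minus `(W - e(X))/e(X) · m̃₁(X)`, whose conditional mean given
`X` vanishes. Since `m̃₁` is arbitrary, the integrability of the two terms has to be extracted
from that of the score; it transfers between `φ g` and `φ μ[g|m']` when `g ≥ 0`.

If `m̃₁(X) = μ[Y¹|m']`, the score is `m̃₁(X) + W (Y¹ - m̃₁(X))/ẽ(X)`, and the conditional mean of
`W (Y¹ - μ[Y¹|m'])` vanishes by the product rule.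
-/

open MeasureTheory ProbabilityTheory
open scoped ENNReal

section

variable {Ω : Type*} {m' : MeasurableSpace Ω} [mΩ : MeasurableSpace Ω] {μ : Measure Ω}

section PullOut

theorem lintegral_ofReal_mul_eq_of_condExp_ae_eq (hm' : m' ≤ mΩ) [SigmaFinite (μ.trim hm')]
    {φ : Ω → ℝ≥0∞} (hφ : Measurable[m'] φ) {g G : Ω → ℝ} (hg : Integrable g μ)
    (hg₀ : 0 ≤ᵐ[μ] g) (hG : μ[g | m'] =ᵐ[μ] G) :
    ∫⁻ ω, ENNReal.ofReal (g ω) * φ ω ∂μ = ∫⁻ ω, ENNReal.ofReal (G ω) * φ ω ∂μ := by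
  -- `φ` only sees the restrictions to `m'` of the measures with densities `g` and `μ[g|m']`,
  -- and these agree.
  have hdensity : ∀ h : Ω → ℝ, AEStronglyMeasurable h μ →
      ∫⁻ ω, ENNReal.ofReal (h ω) * φ ω ∂μ
        = ∫⁻ ω, φ ω ∂(μ.withDensity fun ω => ENNReal.ofReal (h ω)).trim hm' := fun h hh => by
    rw [lintegral_trim hm' hφ, lintegral_withDensity_eq_lintegral_mul₀
      hh.aemeasurable.ennreal_ofReal (hφ.mono hm' le_rfl).aemeasurable]
    rfl
  have htrim : (μ.withDensity fun ω => ENNReal.ofReal (g ω)).trim hm'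
      = (μ.withDensity fun ω => ENNReal.ofReal ((μ[g | m']) ω)).trim hm' := by
    refine @Measure.ext _ m' _ _ fun s hs => ?_
    rw [trim_measurableSet_eq hm' hs, trim_measurableSet_eq hm' hs,
      withDensity_apply _ (hm' s hs), withDensity_apply _ (hm' s hs),
      ← ofReal_integral_eq_lintegral_ofReal hg.restrict (ae_restrict_of_ae hg₀),
      ← ofReal_integral_eq_lintegral_ofReal integrable_condExp.restrict
        (ae_restrict_of_ae (condExp_nonneg hg₀)), setIntegral_condExp hm' hg hs]
  rw [hdensity g hg.1, htrim,
    ← hdensity _ (stronglyMeasurable_condExp.mono hm').aestronglyMeasurable]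
  refine lintegral_congr_ae ?_
  filter_upwards [hG] with ω hω
  rw [hω]

theorem integrable_mul_iff_of_condExp_ae_eq (hm' : m' ≤ mΩ) [SigmaFinite (μ.trim hm')]
    {φ : Ω → ℝ} (hφ : Measurable[m'] φ) {g G : Ω → ℝ} (hg : Integrable g μ)
    (hg₀ : 0 ≤ᵐ[μ] g) (hG : μ[g | m'] =ᵐ[μ] G) (hGm : AEStronglyMeasurable G μ) :
    Integrable (fun ω => φ ω * g ω) μ ↔ Integrable (fun ω => φ ω * G ω) μ := by
  have hφ' : Measurable φ := hφ.mono hm' le_rfl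
  have hG₀ : 0 ≤ᵐ[μ] G := (condExp_nonneg hg₀).trans_eq hG
  have hnorm : ∀ h : Ω → ℝ, 0 ≤ᵐ[μ] h →
      ∫⁻ ω, ‖φ ω * h ω‖ₑ ∂μ = ∫⁻ ω, ENNReal.ofReal (h ω) * ‖φ ω‖ₑ ∂μ := fun h hh => by
    refine lintegral_congr_ae ?_
    filter_upwards [hh] with ω hω
    rw [enorm_mul, Real.enorm_of_nonneg hω, mul_comm]
  rw [Integrable, Integrable, HasFiniteIntegral, HasFiniteIntegral, hnorm g hg₀, hnorm G hG₀,
    lintegral_ofReal_mul_eq_of_condExp_ae_eq hm' (φ := fun ω => ‖φ ω‖ₑ)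
      (measurable_enorm.comp hφ) hg hg₀ hG]
  exact and_congr (iff_of_true (hφ'.aestronglyMeasurable.mul hg.1)
    (hφ'.aestronglyMeasurable.mul hGm)) Iff.rfl

theorem integral_mul_eq_of_condExp_ae_eq (hm' : m' ≤ mΩ) [SigmaFinite (μ.trim hm')]
    {φ : Ω → ℝ} (hφ : Measurable[m'] φ) {g G : Ω → ℝ} (hg : Integrable g μ)
    (hφg : Integrable (fun ω => φ ω * g ω) μ) (hG : μ[g | m'] =ᵐ[μ] G) :
    ∫ ω, φ ω * g ω ∂μ = ∫ ω, φ ω * G ω ∂μ := by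
  rw [← integral_condExp hm']
  refine integral_congr_ae ?_
  filter_upwards [condExp_mul_of_stronglyMeasurable_left hφ.stronglyMeasurable hφg hg, hG]
    with ω h₁ h₂
  exact h₁.trans (by rw [Pi.mul_apply, h₂])

end PullOut

section CondIndep

variable [StandardBorelSpace Ω] [IsFiniteMeasure μ] {hm' : m' ≤ mΩ} {f g : Ω → ℝ}

theorem ProbabilityTheory.CondIndepFun.condExp_mul (hfg : CondIndepFun m' hm' f g μ)
    (hf : Measurable f) (hg : Measurable g) (hf_int : Integrable f μ) (hg_int : Integrable g μ)
    (hfg_int : Integrable (f * g) μ) :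
    μ[f * g | m'] =ᵐ[μ] μ[f | m'] * μ[g | m'] := by
  have hindep : ∀ᵐ ω ∂μ, IndepFun f g (condExpKernel μ m' ω) := by
    filter_upwards [ae_of_ae_trim hm' ((condIndepFun_iff_map_prod_eq_prod_map_map hf hg).1 hfg)]
      with ω hω
    rw [indepFun_iff_map_prod_eq_prod_map_map hf.aemeasurable hg.aemeasurable]
    simpa [Kernel.map_apply, Kernel.prod_apply, hf, hg, hf.prodMk hg] using hω
  filter_upwards [hindep, condExp_ae_eq_integral_condExpKernel hm' hfg_int,
    condExp_ae_eq_integral_condExpKernel hm' hf_int,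
    condExp_ae_eq_integral_condExpKernel hm' hg_int] with ω hω hfg_eq hf_eq hg_eq
  rw [Pi.mul_apply, hfg_eq, hf_eq, hg_eq]
  exact hω.integral_mul_eq_mul_integral hf.aestronglyMeasurable hg.aestronglyMeasurable

theorem ProbabilityTheory.CondIndepFun.condExp_mul_sub_condExp
    (hfg : CondIndepFun m' hm' f g μ) (hf : Measurable f) (hg : Measurable g)
    (hf_int : Integrable f μ) (hg_int : Integrable g μ) (hfg_int : Integrable (f * g) μ)
    (hfg'_int : Integrable (f * μ[g | m']) μ) :
    μ[fun ω => f ω * (g ω - (μ[g | m']) ω) | m'] =ᵐ[μ] 0 := by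
  have hsplit : (fun ω => f ω * (g ω - (μ[g | m']) ω)) = f * g - f * μ[g | m'] := by
    ext ω
    simp only [Pi.sub_apply, Pi.mul_apply, mul_sub]
  filter_upwards [condExp_sub hfg_int hfg'_int m', hfg.condExp_mul hf hg hf_int hg_int hfg_int,
    condExp_mul_of_stronglyMeasurable_right stronglyMeasurable_condExp hfg'_int hf_int]
    with ω h₁ h₂ h₃
  rw [hsplit, h₁, Pi.sub_apply, h₂, h₃, Pi.zero_apply, sub_self]

end CondIndep

section Binary

variable {W f : Ω → ℝ}

theorem norm_le_one_of_eq_zero_or_eq_one {w : ℝ} (h : w = 0 ∨ w = 1) : ‖w‖ ≤ 1 := by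
  rcases h with rfl | rfl <;> simp

theorem MeasureTheory.Integrable.binary_mul (hf : Integrable f μ) (hW : Measurable W)
    (hWbin : ∀ ω, W ω = 0 ∨ W ω = 1) : Integrable (fun ω => W ω * f ω) μ :=
  hf.bdd_mul hW.aestronglyMeasurable <| ae_of_all _ fun ω =>
    norm_le_one_of_eq_zero_or_eq_one (hWbin ω)

theorem MeasureTheory.integrable_of_eq_zero_or_eq_one [IsFiniteMeasure μ] (hW : Measurable W)
    (hWbin : ∀ ω, W ω = 0 ∨ W ω = 1) : Integrable W μ :=
  .of_bound hW.aestronglyMeasurable 1 <| ae_of_all _ fun ω =>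
    norm_le_one_of_eq_zero_or_eq_one (hWbin ω)

end Binary

section Score

noncomputable def aipwScore (W Y π m : Ω → ℝ) (ω : Ω) : ℝ :=
  W ω * Y ω / π ω - (W ω - π ω) / π ω * m ω

theorem aipwScore_congr_ae {W Y π₁ π₂ m₁ m₂ : Ω → ℝ} (hπ : π₁ =ᵐ[μ] π₂) (hm : m₁ =ᵐ[μ] m₂) :
    aipwScore W Y π₁ m₁ =ᵐ[μ] aipwScore W Y π₂ m₂ := by
  filter_upwards [hπ, hm] with ω hπω hmω
  simp only [aipwScore, hπω, hmω]

variable [IsFiniteMeasure μ] {W Y1 E M : Ω → ℝ}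

theorem integrable_sub_div_mul_of_condExp_eq (hm' : m' ≤ mΩ) (hW : Measurable W)
    (hWbin : ∀ ω, W ω = 0 ∨ W ω = 1) (hE : Measurable[m'] E) (hE₀ : ∀ ω, 0 < E ω)
    (hM : Measurable[m'] M) (hprop : μ[W | m'] =ᵐ[μ] E)
    (hM_int : Integrable (fun ω => M ω * (1 - W ω)) μ) :
    Integrable (fun ω => (W ω - E ω) / E ω * M ω) μ := by
  have hW_int : Integrable W μ := integrable_of_eq_zero_or_eq_one hW hWbin
  have hE' : Measurable E := hE.mono hm' le_rfl
  have hW₀ : 0 ≤ᵐ[μ] W := ae_of_all _ fun ω => by rcases hWbin ω with h | h <;> simp [h]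
  have hW₁ : 0 ≤ᵐ[μ] fun ω => 1 - W ω :=
    ae_of_all _ fun ω => by rcases hWbin ω with h | h <;> simp [h]
  have hprop' : μ[fun ω => 1 - W ω | m'] =ᵐ[μ] fun ω => 1 - E ω := by
    filter_upwards [condExp_sub (integrable_const 1) hW_int m', hprop] with ω h₁ h₂
    rw [show (fun ω => 1 - W ω) = (fun _ => (1 : ℝ)) - W from rfl, h₁, Pi.sub_apply,
      condExp_const hm', h₂]
  have hME : Integrable (fun ω => M ω * (1 - E ω)) μ :=
    (integrable_mul_iff_of_condExp_ae_eq hm' hM ((integrable_const 1).sub hW_int) hW₁ hprop'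
      (measurable_const.sub hE').aestronglyMeasurable).1 hM_int
  have hMEW : Integrable (fun ω => M ω * (1 - E ω) / E ω * W ω) μ :=
    (integrable_mul_iff_of_condExp_ae_eq hm' (φ := fun ω => M ω * (1 - E ω) / E ω)
      ((hM.mul (measurable_const.sub hE)).div hE) hW_int hW₀ hprop hE'.aestronglyMeasurable).2
      (hME.congr (ae_of_all _ fun ω => by field_simp [(hE₀ ω).ne']))
  -- `(W - E)/E · M = M (1 - E)/E · W - M (1 - W)`
  refine (hMEW.sub hM_int).congr (ae_of_all _ fun ω => ?_)
  simp only [Pi.sub_apply]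
  field_simp [(hE₀ ω).ne']
  ring

theorem integral_sub_div_mul_eq_zero_of_condExp_eq (hm' : m' ≤ mΩ) (hW_int : Integrable W μ)
    (hE : Measurable[m'] E) (hM : Measurable[m'] M) (hprop : μ[W | m'] =ᵐ[μ] E)
    (hint : Integrable (fun ω => (W ω - E ω) / E ω * M ω) μ) :
    ∫ ω, (W ω - E ω) / E ω * M ω ∂μ = 0 := by
  have hE_int : Integrable E μ := integrable_condExp.congr hprop
  have hcond : μ[fun ω => W ω - E ω | m'] =ᵐ[μ] 0 := by
    filter_upwards [condExp_sub hW_int hE_int m', hprop] with ω h₁ h₂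
    rw [show (fun ω => W ω - E ω) = W - E from rfl, h₁, Pi.sub_apply, h₂,
      condExp_of_stronglyMeasurable hm' hE.stronglyMeasurable hE_int, Pi.zero_apply, sub_self]
  calc ∫ ω, (W ω - E ω) / E ω * M ω ∂μ = ∫ ω, M ω / E ω * (W ω - E ω) ∂μ := by
        congr 1 with ω
        ring
    _ = ∫ ω, M ω / E ω * (0 : Ω → ℝ) ω ∂μ :=
        integral_mul_eq_of_condExp_ae_eq hm' (φ := fun ω => M ω / E ω) (hM.div hE)
          (hW_int.sub hE_int) (hint.congr (ae_of_all _ fun ω => by ring)) hcond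
    _ = 0 := by simp

variable [StandardBorelSpace Ω] {hm' : m' ≤ mΩ}

theorem integral_mul_div_eq_of_condIndepFun (hW : Measurable W) (hY1 : Measurable Y1)
    (hWbin : ∀ ω, W ω = 0 ∨ W ω = 1) (hindep : CondIndepFun m' hm' W Y1 μ)
    (hY1_int : Integrable Y1 μ) (hE : Measurable[m'] E) (hE₀ : ∀ ω, 0 < E ω)
    (hprop : μ[W | m'] =ᵐ[μ] E) (hint : Integrable (fun ω => W ω * Y1 ω / E ω) μ) :
    ∫ ω, W ω * Y1 ω / E ω ∂μ = ∫ ω, Y1 ω ∂μ := by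
  have hWY1 : Integrable (W * Y1) μ := hY1_int.binary_mul hW hWbin
  have hcond : μ[W * Y1 | m'] =ᵐ[μ] fun ω => E ω * (μ[Y1 | m']) ω := by
    filter_upwards [hindep.condExp_mul hW hY1 (integrable_of_eq_zero_or_eq_one hW hWbin) hY1_int
      hWY1, hprop] with ω h₁ h₂
    rw [h₁, Pi.mul_apply, h₂]
  calc ∫ ω, W ω * Y1 ω / E ω ∂μ = ∫ ω, (E ω)⁻¹ * (W * Y1) ω ∂μ := by
        simp only [Pi.mul_apply, div_eq_inv_mul]
    _ = ∫ ω, (E ω)⁻¹ * (E ω * (μ[Y1 | m']) ω) ∂μ :=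
        integral_mul_eq_of_condExp_ae_eq hm' hE.inv hWY1
          (hint.congr (ae_of_all _ fun ω => div_eq_inv_mul _ _)) hcond
    _ = ∫ ω, Y1 ω ∂μ := by
        simp only [inv_mul_cancel_left₀ (hE₀ _).ne']
        exact integral_condExp hm'

theorem integral_aipwScore_of_propensity (hW : Measurable W) (hY1 : Measurable Y1)
    (hWbin : ∀ ω, W ω = 0 ∨ W ω = 1) (hindep : CondIndepFun m' hm' W Y1 μ)
    (hY1_int : Integrable Y1 μ) (hE : Measurable[m'] E) (hE₀ : ∀ ω, 0 < E ω)
    (hM : Measurable[m'] M) (hprop : μ[W | m'] =ᵐ[μ] E)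
    (hint : Integrable (aipwScore W Y1 E M) μ) :
    ∫ ω, aipwScore W Y1 E M ω ∂μ = ∫ ω, Y1 ω ∂μ := by
  have hM_int : Integrable (fun ω => M ω * (1 - W ω)) μ := by
    refine (hint.binary_mul (W := fun ω => 1 - W ω) (measurable_const.sub hW) fun ω => ?_).congr
      (ae_of_all _ fun ω => ?_)
    · rcases hWbin ω with h | h <;> simp [h]
    · rcases hWbin ω with h | h <;> simp [aipwScore, h, (hE₀ ω).ne']
  have haug := integrable_sub_div_mul_of_condExp_eq hm' hW hWbin hE hE₀ hM hprop hM_int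
  have hipw : Integrable (fun ω => W ω * Y1 ω / E ω) μ :=
    (hint.add haug).congr (ae_of_all _ fun ω => by simp [aipwScore])
  calc ∫ ω, aipwScore W Y1 E M ω ∂μ
      = ∫ ω, W ω * Y1 ω / E ω ∂μ - ∫ ω, (W ω - E ω) / E ω * M ω ∂μ := integral_sub hipw haug
    _ = ∫ ω, Y1 ω ∂μ := by
      rw [integral_mul_div_eq_of_condIndepFun hW hY1 hWbin hindep hY1_int hE hE₀ hprop hipw,
        integral_sub_div_mul_eq_zero_of_condExp_eq hm'
          (integrable_of_eq_zero_or_eq_one hW hWbin) hE hM hprop haug, sub_zero]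

theorem integral_aipwScore_of_outcome (hW : Measurable W) (hY1 : Measurable Y1)
    (hWbin : ∀ ω, W ω = 0 ∨ W ω = 1) (hindep : CondIndepFun m' hm' W Y1 μ)
    (hY1_int : Integrable Y1 μ) {π : Ω → ℝ} (hπ : Measurable[m'] π) (hπ₀ : ∀ ω, 0 < π ω)
    (hint : Integrable (aipwScore W Y1 π μ[Y1 | m']) μ) :
    ∫ ω, aipwScore W Y1 π μ[Y1 | m'] ω ∂μ = ∫ ω, Y1 ω ∂μ := by
  set M := μ[Y1 | m']
  have hM_int : Integrable M μ := integrable_condExp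
  have hsplit : ∀ ω, aipwScore W Y1 π M ω = M ω + (π ω)⁻¹ * (W ω * (Y1 ω - M ω)) := fun ω => by
    simp only [aipwScore]
    field_simp [(hπ₀ ω).ne']
    ring
  have hres : Integrable (fun ω => (π ω)⁻¹ * (W ω * (Y1 ω - M ω))) μ :=
    (hint.sub hM_int).congr (ae_of_all _ fun ω => by simp [hsplit])
  have hcond := hindep.condExp_mul_sub_condExp hW hY1
    (integrable_of_eq_zero_or_eq_one hW hWbin) hY1_int (hY1_int.binary_mul hW hWbin)
    (hM_int.binary_mul hW hWbin)
  have hzero : ∫ ω, (π ω)⁻¹ * (W ω * (Y1 ω - M ω)) ∂μ = 0 :=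
    (integral_mul_eq_of_condExp_ae_eq hm' (φ := fun ω => (π ω)⁻¹) hπ.inv
      ((hY1_int.sub hM_int).binary_mul hW hWbin) hres hcond).trans (by simp)
  calc ∫ ω, aipwScore W Y1 π M ω ∂μ
      = ∫ ω, M ω ∂μ + ∫ ω, (π ω)⁻¹ * (W ω * (Y1 ω - M ω)) ∂μ := by
        simp only [hsplit]
        exact integral_add hM_int hres
    _ = ∫ ω, Y1 ω ∂μ := by rw [hzero, add_zero, integral_condExp hm']

end Score

end

theorem doubly_robust_identification_general
    {Ω : Type*} [MeasurableSpace Ω] [StandardBorelSpace Ω]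
    (μ : Measure Ω) [IsProbabilityMeasure μ]
    (X : Ω → ℝ) (W : Ω → ℝ) (Y1 Y0 Y : Ω → ℝ)
    (hX : Measurable X) (hW : Measurable W) (hY1 : Measurable Y1)
    (hWbin : ∀ ω, W ω = 0 ∨ W ω = 1)
    (hY : ∀ ω, Y ω = W ω * Y1 ω + (1 - W ω) * Y0 ω)
    (e : ℝ → ℝ) (he : Measurable e)
    (hoverlap : ∀ x, 0 < e x ∧ e x < 1)
    (hprop : μ[W | MeasurableSpace.comap X inferInstance] =ᵐ[μ] fun ω => e (X ω))
    (hunconf : CondIndepFun (MeasurableSpace.comap X inferInstance) (hX.comap_le) W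
      (fun ω => (Y1 ω, Y0 ω)) μ)
    (etil m1 : ℝ → ℝ) (hetil : Measurable etil) (hm1 : Measurable m1)
    (hetil01 : ∀ x, 0 < etil x ∧ etil x < 1)
    (hY1int : Integrable Y1 μ)
    (hint : Integrable
      (fun ω => W ω * Y ω / etil (X ω) - (W ω - etil (X ω)) / etil (X ω) * m1 (X ω)) μ)
    (hdr : ((fun ω => etil (X ω)) =ᵐ[μ] fun ω => e (X ω)) ∨
      ((fun ω => m1 (X ω)) =ᵐ[μ] μ[Y1 | MeasurableSpace.comap X inferInstance])) :
    ∫ ω, (W ω * Y ω / etil (X ω) - (W ω - etil (X ω)) / etil (X ω) * m1 (X ω)) ∂μ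
      = ∫ ω, Y1 ω ∂μ := by
  have hXm : Measurable[MeasurableSpace.comap X inferInstance] X := comap_measurable X
  have hscore : (fun ω => W ω * Y ω / etil (X ω) - (W ω - etil (X ω)) / etil (X ω) * m1 (X ω))
      = aipwScore W Y1 (fun ω => etil (X ω)) (fun ω => m1 (X ω)) := by
    ext ω
    rcases hWbin ω with h | h <;> simp [aipwScore, hY ω, h]
  rw [hscore] at hint ⊢
  have hindep := hunconf.comp measurable_id measurable_fst
  rcases hdr with hpropensity | houtcome
  · have hscore_ae := aipwScore_congr_ae (W := W) (Y := Y1) hpropensity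
      (Filter.EventuallyEq.rfl (f := fun ω => m1 (X ω)))
    rw [integral_congr_ae hscore_ae]
    exact integral_aipwScore_of_propensity hW hY1 hWbin hindep hY1int (he.comp hXm)
      (fun ω => (hoverlap (X ω)).1) (hm1.comp hXm) hprop (hint.congr hscore_ae)
  · have hscore_ae := aipwScore_congr_ae (W := W) (Y := Y1)
      (Filter.EventuallyEq.rfl (f := fun ω => etil (X ω))) houtcome
    rw [integral_congr_ae hscore_ae]
    exact integral_aipwScore_of_outcome hW hY1 hWbin hindep hY1int (hetil.comp hXm)
      (fun ω => (hetil01 (X ω)).1) (hint.congr hscore_ae)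

/-- Double robustness: if either the working propensity model `ẽ` equals the true
propensity `e` a.s., or the working outcome model `m̃₁` equals `E[Y¹|X]` a.s., then
`E[W·Y/ẽ(X) − ((W−ẽ(X))/ẽ(X))·m̃₁(X)] = E[Y¹]` under unconfoundedness and overlap. -/
theorem doubly_robust_identification
    {Ω : Type*} [MeasurableSpace Ω] [StandardBorelSpace Ω]
    (μ : Measure Ω) [IsProbabilityMeasure μ]
    (X : Ω → ℝ) (W : Ω → ℝ) (Y1 Y0 Y : Ω → ℝ)
    (hX : Measurable X) (hW : Measurable W) (hY1 : Measurable Y1) (hY0 : Measurable Y0)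
    (hWbin : ∀ ω, W ω = 0 ∨ W ω = 1)
    (hY : ∀ ω, Y ω = W ω * Y1 ω + (1 - W ω) * Y0 ω)
    (e : ℝ → ℝ) (he : Measurable e)
    (hoverlap : ∀ x, 0 < e x ∧ e x < 1)
    (hprop : μ[W | MeasurableSpace.comap X inferInstance] =ᵐ[μ] fun ω => e (X ω))
    (hunconf : CondIndepFun (MeasurableSpace.comap X inferInstance) (hX.comap_le) W
      (fun ω => (Y1 ω, Y0 ω)) μ)
    (etil m1 : ℝ → ℝ) (hetil : Measurable etil) (hm1 : Measurable m1)
    (hetil01 : ∀ x, 0 < etil x ∧ etil x < 1)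
    (hY1int : Integrable Y1 μ)
    (hint : Integrable
      (fun ω => W ω * Y ω / etil (X ω) - (W ω - etil (X ω)) / etil (X ω) * m1 (X ω)) μ)
    (hdr : ((fun ω => etil (X ω)) =ᵐ[μ] fun ω => e (X ω)) ∨
      ((fun ω => m1 (X ω)) =ᵐ[μ] μ[Y1 | MeasurableSpace.comap X inferInstance])) :
    ∫ ω, (W ω * Y ω / etil (X ω) - (W ω - etil (X ω)) / etil (X ω) * m1 (X ω)) ∂μ
      = ∫ ω, Y1 ω ∂μ :=
  doubly_robust_identification_general μ X W Y1 Y0 Y hX hW hY1 hWbin hY e he hoverlap hprop hunconf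
    etil m1 hetil hm1 hetil01 hY1int hint hdr
end
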